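/- Let P : X → ℂ be a continuous polynomial, i.e., P(x) = ∑_{k=0}^N M_k(x, …, x) where each M_k is a continuous k-linear map from X^k to ℂ. If P is bounded on 𝔻_X, then P is weakly continuous on bounded sets: for every bounded subset S of X, the restriction of P to S is continuous with respect to the weak topology σ(X, X^*). -/

import Mathlib

open Filter Topology Metric

noncomputable section

structure NormalizedSchauderBasisC (X : Type*) [NormedAddCommGroup X] [NormedSpace ℂ X] where
  e : ℕ → X
  coord : ℕ → X →L[ℂ] ℂ
  norm_e : ∀ j, ‖e j‖ = 1
  coord_e : ∀ i j, coord i (e j) = if i = j then 1 else 0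
  coord_bdd : ∃ C : ℝ, ∀ j, ‖coord j‖ ≤ C
  expand : ∀ x : X,
    Tendsto (fun n => ∑ j ∈ Finset.range n, coord j x • e j) atTop (nhds x)

def polydisk {X : Type*} [NormedAddCommGroup X] [NormedSpace ℂ X]
    (B : NormalizedSchauderBasisC X) (r : ℕ → ℝ) : Set X :=
  {x | ∀ j, ‖B.coord j x‖ < r j}

/-- `P` is weakly continuous on the set `S`: the restriction of `P` to `S` is continuous for
the weak topology `σ(X, X^*)`. -/
def WeaklyContinuousOn {X : Type*} [NormedAddCommGroup X] [NormedSpace ℂ X]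
    (P : X → ℂ) (S : Set X) : Prop :=
  ContinuousOn (fun x : WeakSpace ℂ X => P ((toWeakSpace ℂ X).symm x))
    ((toWeakSpace ℂ X) '' S)

/-!
Write `P = ∑ₖ Mₖ(x, …, x)` and let `Gᵢ(x, t)` be the coefficient of `cⁱ` in `P(x + c • t)`.
By Parseval on the unit circle, `‖Gᵢ(x, t)‖` is at most the supremum of `‖P‖` on `x + 𝕋 • t`,
and `P` is bounded on every polydisk since it is bounded on the unit one. For `i ≥ 1`, Parseval
for `c ↦ Gᵢ(x, s + c • w)`, whose constant and `cⁱ` coefficients are `Gᵢ(x, s)` and `Gᵢ(x, w)`,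
gives `‖Gᵢ(x, s)‖² + ‖Gᵢ(x, w)‖² ≤ sup ‖Gᵢ(x, s + 𝕋 • w)‖²`; iterating over blocks `u₁, …, u_Q`
with disjoint supports in the basis bounds `∑ ‖Gᵢ(x, u_q)‖²` independently of `Q`. Hence
`Gᵢ(x, ·)` is uniformly small on the tails `h - Pₙ h` of bounded vectors, so on a bounded set
`P(x + h) - P(x)` is controlled by finitely many coordinates of `h`, the first `n` of them through
the local Lipschitz bound of `P`: this is weak continuity.
-/

namespace Polynomial

theorem sum_sq_norm_coeff_le_of_norm_sq_eval_le (p : Polynomial ℂ) (s : Finset ℕ) {A : ℝ}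
    (h : ∀ z : ℂ, ‖z‖ = 1 → ‖p.eval z‖ ^ 2 ≤ A) : ∑ i ∈ s, ‖p.coeff i‖ ^ 2 ≤ A := by
  calc ∑ i ∈ s, ‖p.coeff i‖ ^ 2 ≤ ∑ i ∈ s ∪ p.support, ‖p.coeff i‖ ^ 2 :=
        Finset.sum_le_sum_of_subset_of_nonneg Finset.subset_union_left fun _ _ _ => by positivity
    _ = ∑ i ∈ p.support, ‖p.coeff i‖ ^ 2 :=
        (Finset.sum_subset Finset.subset_union_right fun i _ hi => by
          simp [notMem_support_iff.mp hi]).symm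
    _ = Real.circleAverage (fun z ↦ ‖p.eval z‖ ^ 2) 0 1 := p.sum_sq_norm_coeff_eq_circleAverage
    _ ≤ A := Real.circleAverage_mono_on_of_le_circle
        (ContinuousOn.circleIntegrable zero_le_one (by fun_prop))
        fun z hz => h z (by simpa using hz)

theorem norm_coeff_le_of_norm_eval_le (p : Polynomial ℂ) (n : ℕ) {D : ℝ}
    (h : ∀ z : ℂ, ‖z‖ = 1 → ‖p.eval z‖ ≤ D) : ‖p.coeff n‖ ≤ D := by
  have hD : 0 ≤ D := (norm_nonneg _).trans (h 1 norm_one)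
  have := p.sum_sq_norm_coeff_le_of_norm_sq_eval_le {n} (A := D ^ 2) fun z hz =>
    pow_le_pow_left₀ (norm_nonneg _) (h z hz) 2
  rw [Finset.sum_singleton] at this
  exact (pow_le_pow_iff_left₀ (norm_nonneg _) hD two_ne_zero).mp this

end Polynomial

namespace MultilinearMap

variable {ι E : Type*} [Fintype ι] [DecidableEq ι] [AddCommGroup E] [Module ℂ E]

theorem map_add_smul_eq_sum (f : MultilinearMap ℂ (fun _ : ι => E) ℂ) (v w : ι → E) (c : ℂ) :
    f (v + c • w) = ∑ T : Finset ι, c ^ T.card * f (T.piecewise w v) := by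
  rw [add_comm, f.map_add_univ]
  refine Finset.sum_congr rfl fun T _ => ?_
  have := f.map_piecewise_smul (fun _ => c) (T.piecewise w v) T
  rw [Finset.prod_const, smul_eq_mul] at this
  rw [← this]
  congr 1
  ext j
  by_cases hj : j ∈ T <;> simp [hj]

def linePoly (f : MultilinearMap ℂ (fun _ : ι => E) ℂ) (v w : ι → E) : Polynomial ℂ :=
  ∑ T : Finset ι, Polynomial.monomial T.card (f (T.piecewise w v))

variable (f : MultilinearMap ℂ (fun _ : ι => E) ℂ) (v w : ι → E)

theorem eval_linePoly (c : ℂ) : (f.linePoly v w).eval c = f (v + c • w) := by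
  simp [linePoly, Polynomial.eval_finsetSum, map_add_smul_eq_sum, mul_comm]

theorem coeff_linePoly (n : ℕ) :
    (f.linePoly v w).coeff n = ∑ T ∈ Finset.powersetCard n Finset.univ, f (T.piecewise w v) := by
  simp only [linePoly, Polynomial.finsetSum_coeff, Polynomial.coeff_monomial]
  rw [← Finset.sum_filter, Finset.powersetCard_eq_filter, Finset.powerset_univ]

theorem natDegree_linePoly_le : (f.linePoly v w).natDegree ≤ Fintype.card ι :=
  Polynomial.natDegree_sum_le_of_forall_le _ _ fun T _ =>
    (Polynomial.natDegree_monomial_le _).trans (Finset.card_le_univ T)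

end MultilinearMap

section Diagonal

variable {E : Type*} [NormedAddCommGroup E] [NormedSpace ℂ E] {N : ℕ}
  (M : ∀ k : Fin (N + 1), ContinuousMultilinearMap ℂ (fun _ : Fin k => E) ℂ)

def polyEval (x : E) : ℂ := ∑ k, M k (fun _ => x)

def lineCoeff (i : ℕ) (x t : E) : ℂ :=
  ∑ k, ∑ S ∈ Finset.powersetCard i Finset.univ, M k (S.piecewise (fun _ => t) (fun _ => x))

def linePoly (x t : E) : Polynomial ℂ :=
  ∑ k, (M k).toMultilinearMap.linePoly (fun _ => x) (fun _ => t)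

theorem eval_linePoly (x t : E) (c : ℂ) : (linePoly M x t).eval c = polyEval M (x + c • t) := by
  simp only [linePoly, polyEval, Polynomial.eval_finsetSum, MultilinearMap.eval_linePoly]
  rfl

theorem coeff_linePoly (i : ℕ) (x t : E) : (linePoly M x t).coeff i = lineCoeff M i x t := by
  simp only [linePoly, lineCoeff, Polynomial.finsetSum_coeff, MultilinearMap.coeff_linePoly]
  rfl

theorem natDegree_linePoly_lt (x t : E) : (linePoly M x t).natDegree < N + 1 := by
  refine Nat.lt_succ_of_le (Polynomial.natDegree_sum_le_of_forall_le _ _ fun k _ => ?_)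
  exact ((M k).toMultilinearMap.natDegree_linePoly_le _ _).trans
    (by simp [Nat.lt_succ_iff.mp k.isLt])

theorem polyEval_add_smul (x t : E) (c : ℂ) :
    polyEval M (x + c • t) = ∑ i ∈ Finset.range (N + 1), lineCoeff M i x t * c ^ i := by
  rw [← eval_linePoly, Polynomial.eval_eq_sum_range' (natDegree_linePoly_lt M x t)]
  simp only [coeff_linePoly]

theorem lineCoeff_zero (x t : E) : lineCoeff M 0 x t = polyEval M x := by
  simp [lineCoeff, polyEval]

theorem norm_lineCoeff_le (i : ℕ) (x t : E) {D : ℝ}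
    (h : ∀ c : ℂ, ‖c‖ = 1 → ‖polyEval M (x + c • t)‖ ≤ D) : ‖lineCoeff M i x t‖ ≤ D := by
  rw [← coeff_linePoly]
  exact Polynomial.norm_coeff_le_of_norm_eval_le _ i fun c hc => by
    rw [eval_linePoly]; exact h c hc

def lineCoeffLinePoly (i : ℕ) (x s w : E) : Polynomial ℂ :=
  ∑ k, ∑ S ∈ Finset.powersetCard i Finset.univ,
    (M k).toMultilinearMap.linePoly (S.piecewise (fun _ => s) (fun _ => x))
      (S.piecewise (fun _ => w) 0)

theorem eval_lineCoeffLinePoly (i : ℕ) (x s w : E) (c : ℂ) :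
    (lineCoeffLinePoly M i x s w).eval c = lineCoeff M i x (s + c • w) := by
  simp only [lineCoeffLinePoly, lineCoeff, Polynomial.eval_finsetSum, MultilinearMap.eval_linePoly]
  refine Finset.sum_congr rfl fun k _ => Finset.sum_congr rfl fun S _ => congrArg _ ?_
  ext j
  by_cases hj : j ∈ S <;> simp [hj]

theorem coeff_zero_lineCoeffLinePoly (i : ℕ) (x s w : E) :
    (lineCoeffLinePoly M i x s w).coeff 0 = lineCoeff M i x s := by
  simp [lineCoeffLinePoly, lineCoeff, Polynomial.finsetSum_coeff, MultilinearMap.coeff_linePoly]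

theorem coeff_lineCoeffLinePoly (i : ℕ) (x s w : E) :
    (lineCoeffLinePoly M i x s w).coeff i = lineCoeff M i x w := by
  simp only [lineCoeffLinePoly, lineCoeff, Polynomial.finsetSum_coeff,
    MultilinearMap.coeff_linePoly]
  refine Finset.sum_congr rfl fun k _ => Finset.sum_congr rfl fun S hS => ?_
  rw [Finset.sum_eq_single_of_mem S hS]
  · refine congrArg _ (funext fun j => ?_)
    by_cases hj : j ∈ S <;> simp [hj]
  · intro T hT hTS
    -- `T` and `S` have the same size, so `T ⊄ S`, and `w` is paired with `0` off `S`.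
    obtain ⟨j, hjT, hjS⟩ : ∃ j ∈ T, j ∉ S := by
      by_contra! hsub
      exact hTS (Finset.eq_of_subset_of_card_le hsub
        (by rw [(Finset.mem_powersetCard.mp hT).2, (Finset.mem_powersetCard.mp hS).2]))
    exact (M k).toMultilinearMap.map_coord_zero j (by simp [hjT, hjS])

theorem norm_sq_lineCoeff_add_norm_sq_le {i : ℕ} (hi : i ≠ 0) (x s w : E) {A : ℝ}
    (h : ∀ c : ℂ, ‖c‖ = 1 → ‖lineCoeff M i x (s + c • w)‖ ^ 2 ≤ A) :
    ‖lineCoeff M i x s‖ ^ 2 + ‖lineCoeff M i x w‖ ^ 2 ≤ A := by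
  have := (lineCoeffLinePoly M i x s w).sum_sq_norm_coeff_le_of_norm_sq_eval_le {0, i}
    fun c hc => by rw [eval_lineCoeffLinePoly]; exact h c hc
  rwa [Finset.sum_pair hi.symm, coeff_zero_lineCoeffLinePoly, coeff_lineCoeffLinePoly] at this

theorem sum_sq_norm_lineCoeff_le {i : ℕ} (hi : i ≠ 0) (x : E) :
    ∀ {Q : ℕ} (u : Fin Q → E) {A : ℝ},
      (∀ ω : Fin Q → ℂ, (∀ q, ‖ω q‖ = 1) → ‖lineCoeff M i x (∑ q, ω q • u q)‖ ^ 2 ≤ A) →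
      ∑ q, ‖lineCoeff M i x (u q)‖ ^ 2 ≤ A
  | 0, u, A, h => by simpa using (sq_nonneg _).trans (h 0 finZeroElim)
  | Q + 1, u, A, h => by
    rw [Fin.sum_univ_castSucc, ← le_sub_iff_add_le]
    refine sum_sq_norm_lineCoeff_le hi x (fun q => u q.castSucc) fun ω hω => ?_
    rw [le_sub_iff_add_le]
    refine norm_sq_lineCoeff_add_norm_sq_le M hi x _ _ fun c hc => ?_
    have := h (Fin.snoc ω c) (Fin.lastCases (by simpa using hc) (by simpa using hω))
    simpa [Fin.sum_univ_castSucc] using this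

theorem continuous_lineCoeff (i : ℕ) (x : E) : Continuous (lineCoeff M i x) := by
  refine continuous_finsetSum _ fun k _ => continuous_finsetSum _ fun S _ => ?_
  refine (M k).coe_continuous.comp (continuous_pi fun j => ?_)
  by_cases hj : j ∈ S
  · simpa [hj] using continuous_id'
  · simpa [hj] using continuous_const

theorem norm_polyEval_sub_le {R : ℝ} {a b : E} (ha : ‖a‖ ≤ R) (hb : ‖b‖ ≤ R) :
    ‖polyEval M a - polyEval M b‖ ≤ (∑ k : Fin (N + 1), ‖M k‖ * k * R ^ (k - 1 : ℕ)) * ‖a - b‖ := by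
  rw [polyEval, polyEval, ← Finset.sum_sub_distrib, Finset.sum_mul]
  refine (norm_sum_le _ _).trans (Finset.sum_le_sum fun k _ => ?_)
  have hmax : max ‖fun _ : Fin k => a‖ ‖fun _ : Fin k => b‖ ≤ R :=
    max_le ((pi_norm_const_le a).trans ha) ((pi_norm_const_le b).trans hb)
  have hsub : ‖(fun _ : Fin k => a) - fun _ => b‖ ≤ ‖a - b‖ := pi_norm_const_le (a - b)
  refine ((M k).norm_image_sub_le _ _).trans ?_
  have hR : 0 ≤ R := (norm_nonneg a).trans ha
  rw [Fintype.card_fin]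
  gcongr

end Diagonal

theorem norm_apply_sum_smul_le_of_disjoint {E ι : Type*} [NormedAddCommGroup E] [NormedSpace ℂ E]
    (ℓ : E →L[ℂ] ℂ) (s : Finset ι) (u : ι → E) (ω : ι → ℂ) (hω : ∀ q, ‖ω q‖ = 1)
    (hdisj : ∀ q q', q ≠ q' → ℓ (u q) = 0 ∨ ℓ (u q') = 0) {a : ℝ} (ha : 0 ≤ a)
    (hu : ∀ q, ‖ℓ (u q)‖ ≤ a) : ‖ℓ (∑ q ∈ s, ω q • u q)‖ ≤ a := by
  simp only [map_sum, map_smul, smul_eq_mul]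
  by_cases hex : ∃ q₀ ∈ s, ℓ (u q₀) ≠ 0
  · obtain ⟨q₀, hq₀, hne⟩ := hex
    rw [Finset.sum_eq_single_of_mem q₀ hq₀ fun q _ hq => by
      simp [(hdisj q q₀ hq).resolve_right hne]]
    simpa [hω] using hu q₀
  · push Not at hex
    rw [Finset.sum_eq_zero fun q hq => by simp [hex q hq], norm_zero]
    exact ha

namespace NormalizedSchauderBasisC

variable {E : Type*} [NormedAddCommGroup E] [NormedSpace ℂ E] (B : NormalizedSchauderBasisC E)

def proj (n : ℕ) (x : E) : E := ∑ j ∈ Finset.range n, B.coord j x • B.e j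

theorem coord_proj (j n : ℕ) (x : E) :
    B.coord j (B.proj n x) = if j < n then B.coord j x else 0 := by
  simp [proj, map_sum, B.coord_e]

theorem tendsto_proj (x : E) : Tendsto (fun n => B.proj n x) atTop (𝓝 x) := B.expand x

theorem norm_proj_le (n : ℕ) (x : E) : ‖B.proj n x‖ ≤ ∑ j ∈ Finset.range n, ‖B.coord j x‖ :=
  (norm_sum_le _ _).trans_eq (by simp [norm_smul, B.norm_e])

theorem exists_disjoint_blocks {p : E → Prop}
    (h : ∀ n, ∃ m ≥ n, ∃ v, p v ∧ ∀ j, B.coord j v ≠ 0 → n ≤ j ∧ j < m) :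
    ∃ V : ℕ → E, (∀ q, p (V q)) ∧
      ∀ j q q', q ≠ q' → B.coord j (V q) = 0 ∨ B.coord j (V q') = 0 := by
  choose m hm v hv hsupp using h
  let n : ℕ → ℕ := fun q => Nat.rec 0 (fun _ prev => m prev) q
  have hn : Monotone n := monotone_nat_of_le_succ fun q => hm (n q)
  refine ⟨fun q => v (n q), fun q => hv _, fun j q q' hqq' => ?_⟩
  by_contra! hne
  have h₁ := hsupp _ j hne.1
  have h₂ := hsupp _ j hne.2
  rcases Nat.lt_or_gt_of_ne hqq' with hlt | hlt
  · have : m (n q) ≤ n q' := hn hlt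
    omega
  · have : m (n q') ≤ n q := hn hlt
    omega

theorem coord_sub_proj (j n : ℕ) (x : E) :
    B.coord j (x - B.proj n x) = if j < n then 0 else B.coord j x := by
  rw [map_sub, coord_proj]
  split_ifs <;> simp

theorem exists_block_of_frequently {F : Type*} [NormedAddCommGroup F] {g : E → F}
    (hg : Continuous g) {T ε : ℝ}
    (hfreq : ∃ᶠ n in atTop, ∃ h : E, ‖h‖ ≤ T ∧ ε < ‖g (h - B.proj n h)‖) (n : ℕ) :
    ∃ m ≥ n, ∃ v : E, ((∀ j, ‖B.coord j v‖ ≤ ‖B.coord j‖ * T) ∧ ε < ‖g v‖) ∧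
      ∀ j, B.coord j v ≠ 0 → n ≤ j ∧ j < m := by
  obtain ⟨k, hk, h, hhT, hbig⟩ := frequently_atTop.mp hfreq n
  set t := h - B.proj k h
  -- truncating the tail `t` far enough keeps `g` large, by continuity
  have hev : ∀ᶠ m in atTop, ε < ‖g (B.proj m t)‖ :=
    ((hg.tendsto t).comp (B.tendsto_proj t)).norm.eventually_const_lt hbig
  obtain ⟨m, hm, hkm⟩ := (hev.and (eventually_ge_atTop k)).exists
  refine ⟨m, hk.trans hkm, B.proj m t, ⟨fun j => ?_, hm⟩, fun j hj => ?_⟩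
  · rw [coord_proj, coord_sub_proj]
    split_ifs
    · simpa using mul_nonneg (norm_nonneg _) ((norm_nonneg h).trans hhT)
    · exact (B.coord j).le_opNorm_of_le hhT
    · simpa using mul_nonneg (norm_nonneg _) ((norm_nonneg h).trans hhT)
  · rw [coord_proj, coord_sub_proj] at hj
    split_ifs at hj
    · exact absurd rfl hj
    · omega
    · exact absurd rfl hj

end NormalizedSchauderBasisC

theorem weaklyContinuousOn_of_forall_exists_lt {E : Type*} [NormedAddCommGroup E]
    [NormedSpace ℂ E] (ℓ : ℕ → E →L[ℂ] ℂ) {P : E → ℂ} {S : Set E}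
    (h : ∀ x₀ ∈ S, ∀ ε > 0, ∃ n, ∃ δ > 0, ∀ y ∈ S,
      (∀ j < n, ‖ℓ j y - ℓ j x₀‖ < δ) → ‖P y - P x₀‖ < ε) :
    WeaklyContinuousOn P S := by
  rintro _ ⟨x₀, hx₀, rfl⟩
  refine Metric.tendsto_nhds.mpr fun ε hε => ?_
  obtain ⟨n, δ, hδ, hP⟩ := h x₀ hx₀ ε hε
  let F : WeakSpace ℂ E → Fin n → ℂ := fun z j => ℓ j ((toWeakSpace ℂ E).symm z)
  have hF : Continuous F :=
    continuous_pi fun j => WeakBilin.eval_continuous (topDualPairing ℂ E).flip (ℓ j)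
  have hnear : ∀ᶠ z in 𝓝 (toWeakSpace ℂ E x₀), dist (F z) (F (toWeakSpace ℂ E x₀)) < δ :=
    hF.continuousAt (ball_mem_nhds _ hδ)
  filter_upwards [nhdsWithin_le_nhds hnear, self_mem_nhdsWithin] with z hz hzS
  obtain ⟨y, hy, rfl⟩ := hzS
  rw [dist_pi_lt_iff hδ] at hz
  simpa [dist_eq_norm, F] using hP y hy fun j hj => by simpa [dist_eq_norm, F] using hz ⟨j, hj⟩

section Polydisk

variable {E : Type*} [NormedAddCommGroup E] [NormedSpace ℂ E] {N : ℕ}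
  (M : ∀ k : Fin (N + 1), ContinuousMultilinearMap ℂ (fun _ : Fin k => E) ℂ)
  (B : NormalizedSchauderBasisC E) {C : ℝ}

theorem norm_polyEval_le_of_mem_polydisk
    (hC : ∀ x ∈ polydisk B (fun _ => 1), ‖polyEval M x‖ ≤ C) {ρ : ℝ} (hρ : 0 < ρ) {x : E}
    (hx : x ∈ polydisk B (fun _ => ρ)) :
    ‖polyEval M x‖ ≤ ∑ i ∈ Finset.range (N + 1), C * ρ ^ i := by
  have hρ' : (ρ : ℂ) ≠ 0 := by exact_mod_cast hρ.ne'
  have hx' : x = 0 + (ρ : ℂ) • ((ρ : ℂ)⁻¹ • x) := by rw [zero_add, smul_inv_smul₀ hρ']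
  rw [hx', polyEval_add_smul]
  refine (norm_sum_le _ _).trans (Finset.sum_le_sum fun i _ => ?_)
  rw [norm_mul, norm_pow, Complex.norm_real, Real.norm_of_nonneg hρ.le]
  refine mul_le_mul_of_nonneg_right (norm_lineCoeff_le M i 0 _ fun c hc => hC _ fun j => ?_)
    (by positivity)
  rw [zero_add, map_smul, map_smul, norm_smul, norm_smul, hc, one_mul, norm_inv,
    Complex.norm_real, Real.norm_of_nonneg hρ.le, inv_mul_lt_one₀ hρ]
  exact hx j

theorem eventually_norm_lineCoeff_sub_proj_le
    (hC : ∀ x ∈ polydisk B (fun _ => 1), ‖polyEval M x‖ ≤ C) {i : ℕ} (hi : i ≠ 0) (x₀ : E)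
    (T : ℝ) {ε : ℝ} (hε : 0 < ε) :
    ∀ᶠ n in atTop, ∀ h : E, ‖h‖ ≤ T → ‖lineCoeff M i x₀ (h - B.proj n h)‖ ≤ ε := by
  by_contra hcon
  have hfreq : ∃ᶠ n in atTop, ∃ h : E, ‖h‖ ≤ T ∧ ε < ‖lineCoeff M i x₀ (h - B.proj n h)‖ := by
    refine (not_eventually.mp hcon).mono fun n hn => ?_
    push Not at hn
    exact hn
  have hT : 0 ≤ T := by
    obtain ⟨_, h, hh, _⟩ := hfreq.exists
    exact (norm_nonneg h).trans hh
  obtain ⟨V, hV, hdisj⟩ :=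
    B.exists_disjoint_blocks (B.exists_block_of_frequently (continuous_lineCoeff M i x₀) hfreq)
  obtain ⟨c₀, hc₀⟩ := B.coord_bdd
  have hc₀' : 0 ≤ c₀ := (norm_nonneg _).trans (hc₀ 0)
  set ρ := c₀ * (‖x₀‖ + T) + 1
  have hρ : 0 < ρ := by positivity
  set D := ∑ i ∈ Finset.range (N + 1), C * ρ ^ i
  -- the blocks have disjoint supports, so `x₀ + c • ∑ q, ω q • V q` stays in a fixed polydisk
  have hblock : ∀ (Q : ℕ) (ω : Fin Q → ℂ), (∀ q, ‖ω q‖ = 1) →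
      ‖lineCoeff M i x₀ (∑ q, ω q • V q)‖ ^ 2 ≤ D ^ 2 := by
    intro Q ω hω
    refine pow_le_pow_left₀ (norm_nonneg _) (norm_lineCoeff_le M i x₀ _ fun c hc =>
      norm_polyEval_le_of_mem_polydisk M B hC hρ fun j => ?_) 2
    have hsum := norm_apply_sum_smul_le_of_disjoint (B.coord j) Finset.univ (fun q : Fin Q => V q)
      ω hω (fun q q' hqq' => hdisj j q q' (Fin.val_injective.ne hqq'))
      (by positivity) fun q => (hV q).1 j
    calc ‖B.coord j (x₀ + c • ∑ q, ω q • V q)‖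
        ≤ ‖B.coord j‖ * ‖x₀‖ + ‖B.coord j‖ * T := by
          rw [map_add, map_smul, smul_eq_mul]
          refine (norm_add_le _ _).trans (add_le_add ((B.coord j).le_opNorm x₀) ?_)
          rwa [norm_mul, hc, one_mul]
      _ ≤ c₀ * (‖x₀‖ + T) := by rw [← mul_add]; gcongr; exact hc₀ j
      _ < ρ := lt_add_one _
  obtain ⟨Q, hQ⟩ := exists_nat_gt (D ^ 2 / ε ^ 2)
  have hupper := sum_sq_norm_lineCoeff_le M hi x₀ (fun q : Fin Q => V q) (hblock Q)
  have hlower : (Q : ℝ) * ε ^ 2 ≤ ∑ q : Fin Q, ‖lineCoeff M i x₀ (V q)‖ ^ 2 := by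
    simpa using Finset.card_nsmul_le_sum (Finset.univ : Finset (Fin Q)) _ (ε ^ 2)
      fun q _ => pow_le_pow_left₀ hε.le (hV q).2.le 2
  rw [div_lt_iff₀ (by positivity)] at hQ
  linarith

theorem eventually_norm_polyEval_add_sub_proj_sub_le
    (hC : ∀ x ∈ polydisk B (fun _ => 1), ‖polyEval M x‖ ≤ C) (x₀ : E) (T : ℝ) {ε : ℝ}
    (hε : 0 < ε) :
    ∀ᶠ n in atTop, ∀ h : E, ‖h‖ ≤ T →
      ‖polyEval M (x₀ + (h - B.proj n h)) - polyEval M x₀‖ ≤ ε := by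
  have hε' : 0 < ε / (N + 1) := by positivity
  have hall : ∀ᶠ n in atTop, ∀ i ∈ (Finset.range (N + 1)).erase 0, ∀ h : E, ‖h‖ ≤ T →
      ‖lineCoeff M i x₀ (h - B.proj n h)‖ ≤ ε / (N + 1) :=
    (eventually_all_finset _).mpr fun i hi =>
      eventually_norm_lineCoeff_sub_proj_le M B hC (Finset.ne_of_mem_erase hi) x₀ T hε'
  filter_upwards [hall] with n hn h hh
  have h0 : 0 ∈ Finset.range (N + 1) := Finset.mem_range.mpr N.succ_pos
  have hsplit := polyEval_add_smul M x₀ (h - B.proj n h) 1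
  rw [one_smul, ← Finset.add_sum_erase _ _ h0, lineCoeff_zero] at hsplit
  simp only [one_pow, mul_one] at hsplit
  rw [hsplit, add_sub_cancel_left]
  calc ‖∑ i ∈ (Finset.range (N + 1)).erase 0, lineCoeff M i x₀ (h - B.proj n h)‖
      ≤ ∑ _i ∈ (Finset.range (N + 1)).erase 0, ε / (N + 1) :=
        (norm_sum_le _ _).trans (Finset.sum_le_sum fun i hi => hn i hi h hh)
    _ ≤ ε := by
        rw [Finset.sum_const, Finset.card_erase_of_mem h0,
          Finset.card_range, nsmul_eq_mul, Nat.add_sub_cancel, ← mul_div_assoc,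
          div_le_iff₀ (by positivity)]
        nlinarith

theorem exists_forall_coord_lt_norm_polyEval_sub_lt
    (hC : ∀ x ∈ polydisk B (fun _ => 1), ‖polyEval M x‖ ≤ C) {S : Set E}
    (hS : Bornology.IsBounded S) {x₀ : E} (hx₀ : x₀ ∈ S) {ε : ℝ} (hε : 0 < ε) :
    ∃ n, ∃ δ > 0, ∀ y ∈ S, (∀ j < n, ‖B.coord j y - B.coord j x₀‖ < δ) →
      ‖polyEval M y - polyEval M x₀‖ < ε := by
  obtain ⟨R, hR⟩ := hS.subset_closedBall 0
  have hSR : ∀ y ∈ S, ‖y‖ ≤ R := fun y hy => by simpa using hR hy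
  obtain ⟨n, hn⟩ :=
    (eventually_norm_polyEval_add_sub_proj_sub_le M B hC x₀ (2 * R) (half_pos hε)).exists
  set Λ := ∑ k : Fin (N + 1), ‖M k‖ * k * (R + 1) ^ (k - 1 : ℕ)
  have hR0 : 0 ≤ R := (norm_nonneg x₀).trans (hSR x₀ hx₀)
  have hΛ : 0 ≤ Λ := by positivity
  set η := min 1 (ε / (2 * (Λ + 1)))
  have hη : 0 < η := lt_min one_pos (div_pos hε (by linarith))
  refine ⟨n, η / (n + 1), by positivity, fun y hy hclose => ?_⟩
  -- split `y - x₀` into its first `n` coordinates `p`, which are small, and a tail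
  set p := B.proj n (y - x₀)
  have hp : ‖p‖ < η :=
    calc ‖p‖ ≤ ∑ j ∈ Finset.range n, ‖B.coord j (y - x₀)‖ := B.norm_proj_le n _
      _ ≤ n * (η / (n + 1)) := by
          refine (Finset.sum_le_card_nsmul _ _ _ fun j hj => ?_).trans_eq
            (by rw [Finset.card_range, nsmul_eq_mul])
          rw [map_sub]
          exact (hclose j (Finset.mem_range.mp hj)).le
      _ < η := by
          rw [mul_div_assoc', div_lt_iff₀ (by positivity)]
          linarith
  have hyp : ‖y - p‖ ≤ R + 1 :=
    (norm_sub_le _ _).trans (add_le_add (hSR y hy) (hp.le.trans (min_le_left _ _)))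
  have htail := hn (y - x₀)
    ((norm_sub_le _ _).trans (by linarith [hSR y hy, hSR x₀ hx₀]))
  rw [show x₀ + (y - x₀ - p) = y - p by abel] at htail
  have hlip : ‖polyEval M y - polyEval M (y - p)‖ ≤ Λ * ‖p‖ := by
    simpa using norm_polyEval_sub_le M ((hSR y hy).trans (by linarith)) hyp
  have hsmall : Λ * ‖p‖ < ε / 2 :=
    calc Λ * ‖p‖ ≤ Λ * (ε / (2 * (Λ + 1))) := by gcongr; exact hp.le.trans (min_le_right _ _)
      _ < ε / 2 := by
          rw [mul_div_assoc', div_lt_div_iff₀ (by positivity) two_pos]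
          nlinarith
  calc ‖polyEval M y - polyEval M x₀‖
      ≤ ‖polyEval M y - polyEval M (y - p)‖ + ‖polyEval M (y - p) - polyEval M x₀‖ :=
        norm_sub_le_norm_sub_add_norm_sub _ _ _
    _ < ε := by linarith

end Polydisk

theorem stmt2_general {X : Type*} [NormedAddCommGroup X] [NormedSpace ℂ X]
    (B : NormalizedSchauderBasisC X) (P : X → ℂ)
    (hP : ∃ (N : ℕ) (M : ∀ k : Fin (N + 1), ContinuousMultilinearMap ℂ (fun _ : Fin k => X) ℂ),
      ∀ x : X, P x = ∑ k : Fin (N + 1), M k (fun _ => x))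
    (hbdd : ∃ C : ℝ, ∀ x ∈ polydisk B (fun _ => 1), ‖P x‖ ≤ C) :
    ∀ S : Set X, Bornology.IsBounded S → WeaklyContinuousOn P S := by
  intro S hS
  obtain ⟨N, M, hPM⟩ := hP
  obtain rfl : P = polyEval M := funext hPM
  obtain ⟨C, hC⟩ := hbdd
  exact weaklyContinuousOn_of_forall_exists_lt B.coord fun x₀ hx₀ ε hε =>
    exists_forall_coord_lt_norm_polyEval_sub_lt M B hC hS hx₀ hε

/-- a continuous polynomial `P` on `X` (a finite sum of continuous `k`-linear
forms evaluated on the diagonal) which is bounded on `𝔻_X` is weakly continuous on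
bounded sets. -/
theorem stmt2 {X : Type*} [NormedAddCommGroup X] [NormedSpace ℂ X] [CompleteSpace X]
    (B : NormalizedSchauderBasisC X) (P : X → ℂ)
    (hP : ∃ (N : ℕ) (M : ∀ k : Fin (N + 1), ContinuousMultilinearMap ℂ (fun _ : Fin k => X) ℂ),
      ∀ x : X, P x = ∑ k : Fin (N + 1), M k (fun _ => x))
    (hbdd : ∃ C : ℝ, ∀ x ∈ polydisk B (fun _ => 1), ‖P x‖ ≤ C) :
    ∀ S : Set X, Bornology.IsBounded S → WeaklyContinuousOn P S :=
  stmt2_general B P hP hbdd
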